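/- For every real c > 0 and every integer w ≥ 3, the free energy on the symmetric zero-force curve a = b = c+1 is independent of the width: κ_w(c+1, c+1, c) = log(c+1). -/

import Mathlib

/-!
On the curve `a = b = c + 1` the transfer matrix acting on states (height, direction of the last
step) has an explicit positive right eigenvector `r` for the eigenvalue `c + 1`: `(c + 1) r(h, t)`
is the total stiffness weight `c ^ [s = t]` of the steps `s` allowed at height `h`, and the wall
factor of every allowed step (`c + 1` on arrival at a wall, `1` elsewhere) is exactly cancelled by
`r` at the arrival state. Weighting each walk by `r` at its endpoint therefore gives exactly
`(c + 1) ^ n`, and since `min c 1 / (c + 1) ≤ r ≤ 1`, `Z_{w,n}` lies within constant factors of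
`(c + 1) ^ n`.
-/

open Filter
open scoped Classical

noncomputable section

/-- Step value of a Boolean step: `true` is an up step (+1), `false` a down step (−1). -/
def stepVal (x : Bool) : ℤ := if x then 1 else -1

/-- Height of the walk after `k` steps. -/
def ht (σ : ℕ → Bool) (k : ℕ) : ℤ := ∑ i ∈ Finset.range k, stepVal (σ i)

/-- Extend a finite sequence of steps to `ℕ → Bool`. -/
def extFun {n : ℕ} (σ : Fin n → Bool) : ℕ → Bool :=
  fun i => if h : i < n then σ ⟨i, h⟩ else false

/-- The first `n` steps of `σ` stay in the strip `0 ≤ y ≤ w`. -/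
def IsWalk (w n : ℕ) (σ : ℕ → Bool) : Prop :=
  ∀ k ≤ n, 0 ≤ ht σ k ∧ ht σ k ≤ (w : ℤ)

/-- Number of contacts with the bottom wall (excluding the origin):
`m_a(φ) = #{1 ≤ k ≤ n : h_k = 0}`. -/
def ma (n : ℕ) (σ : ℕ → Bool) : ℕ :=
  ((Finset.Icc 1 n).filter (fun k => ht σ k = 0)).card

/-- Number of contacts with the top wall: `m_b(φ) = #{1 ≤ k ≤ n : h_k = w}`. -/
def mb (w n : ℕ) (σ : ℕ → Bool) : ℕ :=
  ((Finset.Icc 1 n).filter (fun k => ht σ k = (w : ℤ))).card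

/-- Number of stiffness points: `m_c(φ) = #{1 ≤ k ≤ n−1 : σ_k = σ_{k+1}}`. -/
def mc (n : ℕ) (σ : ℕ → Bool) : ℕ :=
  ((Finset.range (n - 1)).filter (fun i => σ i = σ (i + 1))).card

/-- Boltzmann weight of a walk: `W(φ) = a^{m_a} b^{m_b} c^{m_c}`. -/
def wt (w n : ℕ) (a b c : ℝ) (σ : ℕ → Bool) : ℝ :=
  a ^ ma n σ * b ^ mb w n σ * c ^ mc n σ

/-- Partition function `Z_{w,n}(a,b,c)`: sum of weights over all walks of length `n`
in the strip of width `w`. -/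
def Z (w n : ℕ) (a b c : ℝ) : ℝ :=
  ∑ σ ∈ Finset.univ.filter (fun σ : Fin n → Bool => IsWalk w n (extFun σ)),
    wt w n a b c (extFun σ)

/-- Fixed-endpoint partition function `Z_{w,n,h}(a,b,c)`: sum over walks of length `n`
in the strip of width `w` ending at height `h`. -/
def Zh (w n h : ℕ) (a b c : ℝ) : ℝ :=
  ∑ σ ∈ Finset.univ.filter
      (fun σ : Fin n → Bool => IsWalk w n (extFun σ) ∧ ht (extFun σ) n = (h : ℤ)),
    wt w n a b c (extFun σ)

end

@[simp] lemma stepVal_true : stepVal true = 1 := rfl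

@[simp] lemma stepVal_false : stepVal false = -1 := rfl

lemma ht_zero (σ : ℕ → Bool) : ht σ 0 = 0 := Finset.sum_range_zero _

lemma ht_succ (σ : ℕ → Bool) (k : ℕ) : ht σ (k + 1) = ht σ k + stepVal (σ k) :=
  Finset.sum_range_succ _ _

section Snoc

variable {n : ℕ} (τ : Fin n → Bool) (s : Bool)

lemma extFun_snoc_of_lt {i : ℕ} (hi : i < n) : extFun (Fin.snoc τ s) i = extFun τ i := by
  simp only [extFun, dif_pos hi, dif_pos (hi.trans n.lt_succ_self)]
  exact Fin.snoc_castSucc (α := fun _ => Bool) (p := τ) (x := s) (i := ⟨i, hi⟩)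

lemma extFun_snoc_self : extFun (Fin.snoc τ s) n = s := by
  simp only [extFun, dif_pos n.lt_succ_self]
  exact Fin.snoc_last (α := fun _ => Bool) (p := τ) (x := s)

lemma ht_snoc_of_le {k : ℕ} (hk : k ≤ n) : ht (extFun (Fin.snoc τ s)) k = ht (extFun τ) k :=
  Finset.sum_congr rfl fun i hi =>
    by rw [extFun_snoc_of_lt τ s ((Finset.mem_range.1 hi).trans_le hk)]

lemma ht_snoc_self : ht (extFun (Fin.snoc τ s)) (n + 1) = ht (extFun τ) n + stepVal s := by
  rw [ht_succ, ht_snoc_of_le τ s le_rfl, extFun_snoc_self]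

lemma isWalk_snoc_iff {w : ℕ} :
    IsWalk w (n + 1) (extFun (Fin.snoc τ s)) ↔ IsWalk w n (extFun τ) ∧
      0 ≤ ht (extFun τ) n + stepVal s ∧ ht (extFun τ) n + stepVal s ≤ w := by
  constructor
  · intro H
    exact ⟨fun k hk => ht_snoc_of_le τ s hk ▸ H k (hk.trans n.le_succ),
      ht_snoc_self τ s ▸ H (n + 1) le_rfl⟩
  · rintro ⟨H, hlast⟩ k hk
    rcases Nat.of_le_succ hk with hk | rfl
    · rw [ht_snoc_of_le τ s hk]; exact H k hk
    · rw [ht_snoc_self]; exact hlast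

lemma card_filter_ht_snoc (p : ℤ → Prop) [DecidablePred p] :
    ((Finset.Icc 1 (n + 1)).filter fun k => p (ht (extFun (Fin.snoc τ s)) k)).card =
      ((Finset.Icc 1 n).filter fun k => p (ht (extFun τ) k)).card +
        if p (ht (extFun τ) n + stepVal s) then 1 else 0 := by
  rw [Finset.card_filter, Finset.card_filter, Finset.sum_Icc_succ_top (by omega),
    ht_snoc_self]
  congr 1
  exact Finset.sum_congr rfl fun k hk => by rw [ht_snoc_of_le τ s (Finset.mem_Icc.1 hk).2]

lemma ma_snoc : ma (n + 1) (extFun (Fin.snoc τ s)) =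
    ma n (extFun τ) + if ht (extFun τ) n + stepVal s = 0 then 1 else 0 :=
  card_filter_ht_snoc τ s (· = 0)

lemma mb_snoc {w : ℕ} : mb w (n + 1) (extFun (Fin.snoc τ s)) =
    mb w n (extFun τ) + if ht (extFun τ) n + stepVal s = w then 1 else 0 :=
  card_filter_ht_snoc τ s (· = (w : ℤ))

lemma mc_snoc (τ : Fin (n + 1) → Bool) : mc (n + 2) (extFun (Fin.snoc τ s)) =
    mc (n + 1) (extFun τ) + if extFun τ n = s then 1 else 0 := by
  rw [mc, mc, show n + 2 - 1 = n + 1 from rfl, Nat.add_sub_cancel, Finset.card_filter,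
    Finset.card_filter,
    Finset.sum_range_succ, extFun_snoc_of_lt τ s n.lt_succ_self, extFun_snoc_self]
  congr 1
  refine Finset.sum_congr rfl fun i hi => ?_
  have hi : i < n := Finset.mem_range.1 hi
  rw [extFun_snoc_of_lt τ s (hi.trans n.lt_succ_self), extFun_snoc_of_lt τ s (by omega)]

lemma wt_snoc {w : ℕ} {a b c : ℝ} (τ : Fin (n + 1) → Bool) :
    wt w (n + 2) a b c (extFun (Fin.snoc τ s)) = wt w (n + 1) a b c (extFun τ) *
      ((if ht (extFun τ) (n + 1) + stepVal s = 0 then a else 1) *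
        (if ht (extFun τ) (n + 1) + stepVal s = w then b else 1) *
        (if extFun τ n = s then c else 1)) := by
  simp only [wt, ma_snoc, mb_snoc, mc_snoc, pow_add]
  split_ifs <;> ring

end Snoc

lemma Fintype.sum_fun_fin_succ {α M : Type*} [Fintype α] [AddCommMonoid M] {n : ℕ}
    (f : (Fin (n + 1) → α) → M) :
    ∑ σ, f σ = ∑ τ : Fin n → α, ∑ a : α, f (Fin.snoc τ a) := by
  rw [← (Fin.snocEquiv fun _ => α).sum_comp, Fintype.sum_prod_type, Finset.sum_comm]
  rfl

noncomputable def walkWeight (w n : ℕ) (a b c : ℝ) (σ : ℕ → Bool) : ℝ :=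
  if IsWalk w n σ then wt w n a b c σ else 0

noncomputable def wallTransfer (w : ℕ) (a b : ℝ) (h : ℤ) (s : Bool) : ℝ :=
  if 0 ≤ h + stepVal s ∧ h + stepVal s ≤ w then
    (if h + stepVal s = 0 then a else 1) * (if h + stepVal s = w then b else 1)
  else 0

/-- Entry of the transfer matrix from the state (height `h`, last step `t`) to the state
(height `h + stepVal s`, last step `s`). -/
noncomputable def transfer (w : ℕ) (a b c : ℝ) (h : ℤ) (t s : Bool) : ℝ :=
  wallTransfer w a b h s * if t = s then c else 1

section WalkWeight

variable {w : ℕ} {a b c : ℝ}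

lemma Z_eq_sum_walkWeight (n : ℕ) :
    Z w n a b c = ∑ σ : Fin n → Bool, walkWeight w n a b c (extFun σ) :=
  Finset.sum_filter _ _

lemma walkWeight_snoc {n : ℕ} (τ : Fin (n + 1) → Bool) (s : Bool) :
    walkWeight w (n + 2) a b c (extFun (Fin.snoc τ s)) =
      walkWeight w (n + 1) a b c (extFun τ) *
        transfer w a b c (ht (extFun τ) (n + 1)) (extFun τ n) s := by
  rw [walkWeight, walkWeight, transfer, wallTransfer, isWalk_snoc_iff, wt_snoc]
  by_cases hτ : IsWalk w (n + 1) (extFun τ)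
  · by_cases hs :
        0 ≤ ht (extFun τ) (n + 1) + stepVal s ∧ ht (extFun τ) (n + 1) + stepVal s ≤ w
    · rw [if_pos ⟨hτ, hs⟩, if_pos hτ, if_pos hs, mul_assoc]
    · rw [if_neg fun h => hs h.2, if_neg hs, zero_mul, mul_zero]
  · rw [if_neg fun h => hτ h.1, if_neg hτ, zero_mul]

lemma walkWeight_one_snoc (τ : Fin 0 → Bool) (s : Bool) :
    walkWeight w 1 a b c (extFun (Fin.snoc τ s)) = wallTransfer w a b 0 s := by
  have hwalk : IsWalk w 0 (extFun τ) := fun k hk => by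
    rw [Nat.le_zero.1 hk, ht_zero]; exact ⟨le_rfl, Int.natCast_nonneg w⟩
  simp only [walkWeight, isWalk_snoc_iff, hwalk, true_and, ht_zero, zero_add, wt, ma_snoc,
    mb_snoc, mc, wallTransfer]
  simp [ma, mb]

end WalkWeight

noncomputable def transferEigvec (c : ℝ) (w : ℕ) (h : ℤ) (t : Bool) : ℝ :=
  (∑ s : Bool,
    if 0 ≤ h + stepVal s ∧ h + stepVal s ≤ w then (if t = s then c else 1) else 0) / (c + 1)

section TransferEigvec

variable {c : ℝ} {w : ℕ} {h : ℤ}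

lemma wallTransfer_mul_transferEigvec (hc : c + 1 ≠ 0) (hw : 1 ≤ w) (h0 : 0 ≤ h)
    (hhw : h ≤ w) (s : Bool) :
    wallTransfer w (c + 1) (c + 1) h s * transferEigvec c w (h + stepVal s) s =
      if 0 ≤ h + stepVal s ∧ h + stepVal s ≤ w then 1 else 0 := by
  cases s <;> simp only [wallTransfer, transferEigvec, Fintype.sum_bool, stepVal] <;>
    split_ifs <;> first | contradiction | omega | (field_simp <;> ring)

lemma sum_transfer_mul_transferEigvec (hc : c + 1 ≠ 0) (hw : 1 ≤ w) (h0 : 0 ≤ h)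
    (hhw : h ≤ w) (t : Bool) :
    ∑ s : Bool, transfer w (c + 1) (c + 1) c h t s * transferEigvec c w (h + stepVal s) s =
      (c + 1) * transferEigvec c w h t := by
  rw [transferEigvec, mul_div_cancel₀ _ hc]
  refine Finset.sum_congr rfl fun s _ => ?_
  rw [transfer, mul_right_comm, wallTransfer_mul_transferEigvec hc hw h0 hhw, boole_mul]

lemma transferEigvec_le_one (hc : 0 ≤ c) (t : Bool) : transferEigvec c w h t ≤ 1 := by
  rw [transferEigvec, div_le_one (by positivity), Fintype.sum_bool]
  cases t <;> simp only [Bool.false_eq_true, Bool.true_eq_false, if_true, if_false] <;>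
    split_ifs <;> linarith

lemma min_div_le_transferEigvec (hc : 0 ≤ c) (hw : 1 ≤ w) (h0 : 0 ≤ h) (hhw : h ≤ w)
    (t : Bool) : min c 1 / (c + 1) ≤ transferEigvec c w h t := by
  have hmin : 0 ≤ min c 1 := le_min hc zero_le_one
  rw [transferEigvec, Fintype.sum_bool]
  gcongr
  simp only [stepVal]
  cases t <;> simp only [Bool.false_eq_true, Bool.true_eq_false, if_true, if_false] <;>
    split_ifs <;> first | omega | linarith [min_le_left c 1, min_le_right c 1]

end TransferEigvec

noncomputable def eigvecZ (c : ℝ) (w n : ℕ) : ℝ :=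
  ∑ σ : Fin (n + 1) → Bool, walkWeight w (n + 1) (c + 1) (c + 1) c (extFun σ) *
    transferEigvec c w (ht (extFun σ) (n + 1)) (extFun σ n)

section EigvecZ

variable {c : ℝ} {w : ℕ}

lemma eigvecZ_zero (hc : c + 1 ≠ 0) (hw : 1 ≤ w) : eigvecZ c w 0 = 1 := by
  have hw' : (1 : ℤ) ≤ w := by exact_mod_cast hw
  rw [eigvecZ, Fintype.sum_fun_fin_succ, Fintype.sum_unique, Fintype.sum_bool,
    walkWeight_one_snoc, walkWeight_one_snoc]
  simp only [ht_snoc_self, ht_zero, extFun_snoc_self,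
    wallTransfer_mul_transferEigvec hc hw le_rfl (Int.natCast_nonneg w)]
  simp [hw']

lemma eigvecZ_succ (hc : c + 1 ≠ 0) (hw : 1 ≤ w) (n : ℕ) :
    eigvecZ c w (n + 1) = (c + 1) * eigvecZ c w n := by
  rw [eigvecZ, Fintype.sum_fun_fin_succ, eigvecZ, Finset.mul_sum]
  refine Finset.sum_congr rfl fun τ _ => ?_
  simp only [walkWeight_snoc, ht_snoc_self, extFun_snoc_self, mul_assoc, ← Finset.mul_sum]
  by_cases hτ : IsWalk w (n + 1) (extFun τ)
  · obtain ⟨h0, hhw⟩ := hτ (n + 1) le_rfl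
    rw [sum_transfer_mul_transferEigvec hc hw h0 hhw]
    ring
  · rw [walkWeight, if_neg hτ, zero_mul, zero_mul, mul_zero]

lemma eigvecZ_eq_pow (hc : c + 1 ≠ 0) (hw : 1 ≤ w) (n : ℕ) : eigvecZ c w n = (c + 1) ^ n := by
  induction n with
  | zero => rw [eigvecZ_zero hc hw, pow_zero]
  | succ n ih => rw [eigvecZ_succ hc hw, ih, pow_succ, mul_comm]

end EigvecZ

section Bounds

variable {c : ℝ} {w : ℕ}

lemma walkWeight_nonneg {a b : ℝ} (ha : 0 ≤ a) (hb : 0 ≤ b) (hc : 0 ≤ c) (n : ℕ)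
    (σ : ℕ → Bool) : 0 ≤ walkWeight w n a b c σ := by
  unfold walkWeight wt
  split_ifs <;> positivity

lemma eigvecZ_le_Z (hc : 0 ≤ c) (n : ℕ) : eigvecZ c w n ≤ Z w (n + 1) (c + 1) (c + 1) c := by
  rw [eigvecZ, Z_eq_sum_walkWeight]
  gcongr with σ
  exact mul_le_of_le_one_right (walkWeight_nonneg (by positivity) (by positivity) hc _ _)
    (transferEigvec_le_one hc _)

lemma min_div_mul_Z_le_eigvecZ (hc : 0 ≤ c) (hw : 1 ≤ w) (n : ℕ) :
    min c 1 / (c + 1) * Z w (n + 1) (c + 1) (c + 1) c ≤ eigvecZ c w n := by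
  rw [eigvecZ, Z_eq_sum_walkWeight, Finset.mul_sum]
  refine Finset.sum_le_sum fun σ _ => ?_
  by_cases hσ : IsWalk w (n + 1) (extFun σ)
  · obtain ⟨h0, hhw⟩ := hσ (n + 1) le_rfl
    rw [mul_comm]
    exact mul_le_mul_of_nonneg_left (min_div_le_transferEigvec hc hw h0 hhw _)
      (walkWeight_nonneg (by positivity) (by positivity) hc _ _)
  · simp [walkWeight, hσ]

end Bounds

lemma tendsto_log_div_of_mul_pow_le_of_le_mul_pow {u : ℕ → ℝ} {x C₁ C₂ : ℝ} (hx : 0 < x)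
    (hC₁ : 0 < C₁) (hlow : ∀ᶠ n in atTop, C₁ * x ^ n ≤ u n)
    (hup : ∀ᶠ n in atTop, u n ≤ C₂ * x ^ n) :
    Tendsto (fun n : ℕ => Real.log (u n) / n) atTop (nhds (Real.log x)) := by
  have hlog : ∀ C > 0, ∀ n : ℕ, n ≠ 0 →
      Real.log (C * x ^ n) / n = Real.log C / n + Real.log x := by
    intro C hC n hn
    rw [Real.log_mul hC.ne' (pow_pos hx n).ne', Real.log_pow]
    field_simp
  have hlim : ∀ C, Tendsto (fun n : ℕ => Real.log C / n + Real.log x) atTop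
      (nhds (Real.log x)) :=
    fun C => by simpa using (tendsto_const_div_atTop_nhds_zero_nat (Real.log C)).add_const _
  refine tendsto_of_tendsto_of_tendsto_of_le_of_le' (hlim C₁) (hlim C₂) ?_ ?_
  · filter_upwards [hlow, eventually_ne_atTop 0] with n hn hn0
    rw [← hlog C₁ hC₁ n hn0]
    gcongr
  · filter_upwards [hlow, hup, eventually_ne_atTop 0] with n hn hn' hn0
    have hu : 0 < u n := (by positivity : 0 < C₁ * x ^ n).trans_le hn
    have hC₂ : 0 < C₂ := pos_of_mul_pos_left (hu.trans_le hn') (pow_pos hx n).le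
    rw [← hlog C₂ hC₂ n hn0]
    gcongr

/-- on the symmetric zero-force curve `a = b = c+1` the free energy equals
`log(c+1)`, independently of the width. -/
theorem symmetric_zero_force_curve (c : ℝ) (hc : 0 < c) (w : ℕ) (hw : 3 ≤ w) (κ : ℝ)
    (hκ : Tendsto (fun n : ℕ => Real.log (Z w n (c + 1) (c + 1) c) / (n : ℝ)) atTop
      (nhds κ)) :
    κ = Real.log (c + 1) := by
  have hw1 : 1 ≤ w := by omega
  have hc1 : 0 < c + 1 := by positivity
  have hmin : 0 < min c 1 := lt_min hc one_pos
  refine tendsto_nhds_unique hκ <| tendsto_log_div_of_mul_pow_le_of_le_mul_pow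
    (C₁ := (c + 1)⁻¹) (C₂ := (min c 1)⁻¹) hc1 (inv_pos.2 hc1) ?_ ?_ <;>
    filter_upwards [eventually_ne_atTop 0] with n hn <;>
    obtain ⟨k, rfl⟩ := Nat.exists_eq_succ_of_ne_zero hn
  · rw [pow_succ', inv_mul_cancel_left₀ hc1.ne', ← eigvecZ_eq_pow hc1.ne' hw1]
    exact eigvecZ_le_Z hc.le k
  · have hZ := min_div_mul_Z_le_eigvecZ hc.le hw1 k
    rw [eigvecZ_eq_pow hc1.ne' hw1, div_mul_eq_mul_div, div_le_iff₀ hc1, ← pow_succ] at hZ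
    rwa [inv_mul_eq_div, le_div_iff₀' hmin]
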